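/- arXiv:1812.09183 — 7 statements merged into one kernel-verified Lean document; each statement's English description precedes it below -/
import Mathlib

section
/- Let A and B be finite-dimensional complex Hilbert spaces and let U be a unitary on A ⊗ B. If for every operator O_A on A and every operator O_B on B one has [U† (O_A ⊗ 1_B) U, 1_A ⊗ O_B] = 0 and [O_A ⊗ 1_B, U† (1_A ⊗ O_B) U] = 0, then there exist unitaries U_A on A and U_B on B such that U = U_A ⊗ U_B. -/
open Matrix Kronecker
open scoped ComplexOrder

/-!
View `U` as an `m × m` matrix of blocks `T i a : Matrix n n`. The `(a, c)` block of
`Uᴴ * (single i j 1 ⊗ₖ 1) * U` is `(T i a)ᴴ * T j c`, and it commutes with every `Y` because the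
whole operator commutes with every `1 ⊗ₖ Y`; so all these products are scalars. For a nonzero
block `T₀` this gives `T₀ᴴ * T₀ = r • 1` with `r > 0`, so `B := r^(-1/2) • T₀` is unitary, and
every block `T = B * (Bᴴ * T)` is a multiple of `B`, i.e. `U = C ⊗ₖ B`. Unitarity of `U` and `B`
then forces `C` to be unitary.
-/

namespace Matrix

theorem comp_symm_kronecker {l m n p R : Type*} [Mul R] (X : Matrix l m R) (Y : Matrix n p R) :
    (comp l m n p R).symm (X ⊗ₖ Y) = X.map (· • Y) := rfl

variable {m n R 𝕜 : Type*} [Fintype m] [Fintype n]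

theorem commute_comp_symm_apply_of_commute_one_kronecker [DecidableEq m] [CommSemiring R]
    {M : Matrix (m × n) (m × n) R} {Y : Matrix n n R} (h : Commute M (1 ⊗ₖ Y)) (i j : m) :
    Commute ((comp m m n n R).symm M i j) Y := by
  have := congrFun₂ (congrArg (compRingEquiv m n R).symm h.eq) i j
  rwa [map_mul, map_mul, compRingEquiv_symm_apply, compRingEquiv_symm_apply, comp_symm_kronecker,
    ← diagonal_one, diagonal_map (zero_smul R Y), mul_diagonal, diagonal_mul,
    one_smul] at this

theorem comp_symm_conjTranspose_mul_single_kronecker_one_mul_apply [DecidableEq m] [DecidableEq n]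
    [CommSemiring R] [StarRing R] (U : Matrix (m × n) (m × n) R) (i j a c : m) :
    (comp m m n n R).symm (Uᴴ * (single i j 1 ⊗ₖ 1) * U) a c
      = ((comp m m n n R).symm U i a)ᴴ * (comp m m n n R).symm U j c := by
  ext k l
  simp [mul_apply, single, Fintype.sum_prod_type, one_apply, ite_and]

theorem mem_unitaryGroup_of_kronecker_mem_unitaryGroup [DecidableEq m] [DecidableEq n]
    [CommRing R] [StarRing R] [Nonempty n] {A : Matrix m m R} {B : Matrix n n R}
    (hAB : A ⊗ₖ B ∈ unitaryGroup (m × n) R) (hB : B ∈ unitaryGroup n R) : A ∈ unitaryGroup m R := by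
  rw [mem_unitaryGroup_iff', star_eq_conjTranspose] at hAB hB ⊢
  rw [conjTranspose_kronecker, ← mul_kronecker_mul, hB] at hAB
  obtain ⟨b⟩ := ‹Nonempty n›
  ext i j
  simpa [one_apply] using congrFun₂ hAB (i, b) (j, b)

theorem pos_of_conjTranspose_mul_self_eq_smul_one [DecidableEq n] [RCLike 𝕜] {T : Matrix m n 𝕜}
    (hT : T ≠ 0) {s : 𝕜} (hs : Tᴴ * T = s • 1) : 0 < s := by
  obtain ⟨-, b, -⟩ : ∃ a b, T a b ≠ 0 := by
    by_contra! h
    exact hT (Matrix.ext h)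
  refine lt_of_le_of_ne ?_ fun h => hT ?_
  · simpa [hs] using (posSemidef_conjTranspose_mul_self T).diag_nonneg (i := b)
  · rw [← conjTranspose_mul_self_eq_zero, hs, ← h, zero_smul]

theorem exists_smul_unitary_of_conjTranspose_mul_mem_range_scalar [DecidableEq n] [RCLike 𝕜]
    {ι : Type*} (T : ι → Matrix n n 𝕜) (hT : ∀ i j, (T i)ᴴ * T j ∈ Set.range (scalar n)) :
    ∃ (c : ι → 𝕜) (B : Matrix n n 𝕜), B ∈ unitaryGroup n 𝕜 ∧ ∀ i, T i = c i • B := by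
  by_cases hzero : ∀ i, T i = 0
  · exact ⟨0, 1, one_mem _, fun i => by simp [hzero i]⟩
  push Not at hzero
  obtain ⟨i₀, hi₀⟩ := hzero
  choose s hs using hT i₀
  replace hs (j) : (T i₀)ᴴ * T j = s j • 1 := by rw [← hs j, scalar_apply, smul_one_eq_diagonal]
  obtain ⟨r, hr, hrs⟩ :=
    RCLike.pos_iff_exists_ofReal.mp (pos_of_conjTranspose_mul_self_eq_smul_one hi₀ (hs i₀))
  set t : 𝕜 := ((√r : ℝ) : 𝕜)
  have ht_ne : t ≠ 0 := RCLike.ofReal_ne_zero.mpr (Real.sqrt_pos.mpr hr).ne'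
  have ht_sq : t * t = s i₀ := by rw [← hrs, ← RCLike.ofReal_mul, Real.mul_self_sqrt hr.le]
  set B : Matrix n n 𝕜 := t⁻¹ • T i₀
  have hBT (j) : Bᴴ * T j = (t⁻¹ * s j) • 1 := by
    rw [conjTranspose_smul, star_inv₀, RCLike.star_def, RCLike.conj_ofReal, smul_mul, hs j,
      smul_smul]
  have hB : B ∈ unitaryGroup n 𝕜 := by
    rw [mem_unitaryGroup_iff', star_eq_conjTranspose, mul_smul_comm, hBT, smul_smul, ← ht_sq,
      inv_mul_cancel_left₀ ht_ne, inv_mul_cancel₀ ht_ne, one_smul]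
  refine ⟨fun j => t⁻¹ * s j, B, hB, fun j => ?_⟩
  calc T j = B * Bᴴ * T j := by rw [← star_eq_conjTranspose, mem_unitaryGroup_iff.mp hB, one_mul]
    _ = (t⁻¹ * s j) • B := by rw [mul_assoc, hBT, mul_smul_comm, mul_one]

theorem exists_unitary_kronecker_eq_of_commute_conj_kronecker_one [DecidableEq m] [DecidableEq n]
    [RCLike 𝕜] {U : Matrix (m × n) (m × n) 𝕜} (hU : U ∈ unitaryGroup (m × n) 𝕜)
    (hcomm : ∀ (X : Matrix m m 𝕜) (Y : Matrix n n 𝕜), Commute (Uᴴ * (X ⊗ₖ 1) * U) (1 ⊗ₖ Y)) :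
    ∃ (UA : Matrix m m 𝕜) (UB : Matrix n n 𝕜),
      UA ∈ unitaryGroup m 𝕜 ∧ UB ∈ unitaryGroup n 𝕜 ∧ U = UA ⊗ₖ UB := by
  cases isEmpty_or_nonempty n
  · exact ⟨1, 1, one_mem _, one_mem _, Subsingleton.elim _ _⟩
  let blocks := (comp m m n n 𝕜).symm U
  have hscalar : ∀ p q : m × m, (blocks p.1 p.2)ᴴ * blocks q.1 q.2 ∈ Set.range (scalar n) := by
    rintro ⟨i, a⟩ ⟨j, c⟩
    refine mem_range_scalar_iff_commute_single'.mpr fun k l => ?_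
    rw [← comp_symm_conjTranspose_mul_single_kronecker_one_mul_apply]
    exact (commute_comp_symm_apply_of_commute_one_kronecker (hcomm _ (single k l 1)) a c).symm
  obtain ⟨c, UB, hUB, hc⟩ := exists_smul_unitary_of_conjTranspose_mul_mem_range_scalar
    (fun p : m × m => blocks p.1 p.2) hscalar
  have hU_eq : U = of (fun i a => c (i, a)) ⊗ₖ UB := by
    ext ⟨i, k⟩ ⟨a, l⟩
    exact congrFun₂ (hc (i, a)) k l
  exact ⟨_, UB, mem_unitaryGroup_of_kronecker_mem_unitaryGroup (hU_eq ▸ hU) hUB, hUB, hU_eq⟩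

end Matrix

theorem stmt0_general (dA dB : ℕ)
    (U : Matrix (Fin dA × Fin dB) (Fin dA × Fin dB) ℂ)
    (hU : U ∈ Matrix.unitaryGroup (Fin dA × Fin dB) ℂ)
    (hcomm : ∀ (OA : Matrix (Fin dA) (Fin dA) ℂ) (OB : Matrix (Fin dB) (Fin dB) ℂ),
      Commute (Uᴴ * (OA ⊗ₖ (1 : Matrix (Fin dB) (Fin dB) ℂ)) * U)
        ((1 : Matrix (Fin dA) (Fin dA) ℂ) ⊗ₖ OB) ∧
      Commute (OA ⊗ₖ (1 : Matrix (Fin dB) (Fin dB) ℂ))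
        (Uᴴ * ((1 : Matrix (Fin dA) (Fin dA) ℂ) ⊗ₖ OB) * U)) :
    ∃ (UA : Matrix (Fin dA) (Fin dA) ℂ) (UB : Matrix (Fin dB) (Fin dB) ℂ),
      UA ∈ Matrix.unitaryGroup (Fin dA) ℂ ∧ UB ∈ Matrix.unitaryGroup (Fin dB) ℂ ∧
      U = UA ⊗ₖ UB := by
  exact exists_unitary_kronecker_eq_of_commute_conj_kronecker_one hU fun X Y => (hcomm X Y).1

theorem stmt0 (dA dB : ℕ) (hA : 1 ≤ dA) (hB : 1 ≤ dB)
    (U : Matrix (Fin dA × Fin dB) (Fin dA × Fin dB) ℂ)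
    (hU : U ∈ Matrix.unitaryGroup (Fin dA × Fin dB) ℂ)
    (hcomm : ∀ (OA : Matrix (Fin dA) (Fin dA) ℂ) (OB : Matrix (Fin dB) (Fin dB) ℂ),
      Commute (Uᴴ * (OA ⊗ₖ (1 : Matrix (Fin dB) (Fin dB) ℂ)) * U)
        ((1 : Matrix (Fin dA) (Fin dA) ℂ) ⊗ₖ OB) ∧
      Commute (OA ⊗ₖ (1 : Matrix (Fin dB) (Fin dB) ℂ))
        (Uᴴ * ((1 : Matrix (Fin dA) (Fin dA) ℂ) ⊗ₖ OB) * U)) :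
    ∃ (UA : Matrix (Fin dA) (Fin dA) ℂ) (UB : Matrix (Fin dB) (Fin dB) ℂ),
      UA ∈ Matrix.unitaryGroup (Fin dA) ℂ ∧ UB ∈ Matrix.unitaryGroup (Fin dB) ℂ ∧
      U = UA ⊗ₖ UB :=
  stmt0_general dA dB U hU hcomm
end

section
/- Let A and B be finite-dimensional complex Hilbert spaces and U a unitary on A ⊗ B such that for every operator O_A on A, the operator U† (O_A ⊗ 1_B) U commutes with 1_A ⊗ O_B for all operators O_B on B. Then there exists an invertible matrix V_A on A with U† (O_A ⊗ 1_B) U = (V_A⁻¹ O_A V_A) ⊗ 1_B for all O_A. -/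
/-!
Since `U†(O_A ⊗ 1)U` commutes with every `1 ⊗ O_B`, each of its `d_B × d_B` blocks is a scalar,
so it equals `F(O_A) ⊗ 1` for a unique matrix `F(O_A)`. Conjugation by `U` is an algebra
automorphism and `O_A ↦ O_A ⊗ 1` is an injective algebra map, so `F` is a unital algebra
endomorphism of `M_{d_A}(ℂ)`, which by Skolem–Noether is conjugation by an invertible matrix.
-/

open Matrix Kronecker

theorem AlgHom.exists_comp_eq_of_forall_mem_range {R A B C : Type*} [CommSemiring R] [Semiring A]
    [Semiring B] [Semiring C] [Algebra R A] [Algebra R B] [Algebra R C] {ι : B →ₐ[R] C}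
    (hι : Function.Injective ι) {φ : A →ₐ[R] C} (h : ∀ a, φ a ∈ ι.range) :
    ∃ F : A →ₐ[R] B, ι.comp F = φ :=
  ⟨(AlgEquiv.ofInjective ι hι).symm.toAlgHom.comp (φ.codRestrict ι.range h), by
    ext a
    exact congr_arg Subtype.val ((AlgEquiv.ofInjective ι hι).apply_symm_apply ⟨φ a, h a⟩)⟩

namespace Matrix

section Kronecker

variable {m n R : Type*} [Fintype m] [Fintype n] [DecidableEq m] [CommSemiring R]

theorem commute_submatrix_of_commute_one_kronecker {X : Matrix (m × n) (m × n) R}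
    {E : Matrix n n R} (h : Commute X ((1 : Matrix m m R) ⊗ₖ E)) (a a' : m) :
    Commute (X.submatrix (Prod.mk a) (Prod.mk a')) E := by
  ext b b'
  simpa [mul_apply, Fintype.sum_prod_type, one_apply, ite_mul, mul_ite] using
    congr_fun₂ h.eq (a, b) (a', b')

variable [DecidableEq n]

theorem exists_eq_kronecker_one_of_forall_commute {X : Matrix (m × n) (m × n) R}
    (h : ∀ E : Matrix n n R, Commute X ((1 : Matrix m m R) ⊗ₖ E)) :
    ∃ Y : Matrix m m R, X = Y ⊗ₖ 1 := by
  choose c hc using fun a a' => mem_range_scalar_iff_commute_single'.mpr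
    fun i j => (commute_submatrix_of_commute_one_kronecker (h (single i j 1)) a a').symm
  refine ⟨of c, ?_⟩
  ext ⟨a, b⟩ ⟨a', b'⟩
  simpa [one_apply, diagonal_apply] using (congr_fun₂ (hc a a') b b').symm

variable (m n R) in
def kroneckerOneAlgHom : Matrix m m R →ₐ[R] Matrix (m × n) (m × n) R where
  toFun A := A ⊗ₖ 1
  map_one' := one_kronecker_one
  map_mul' A B := by rw [← mul_kronecker_mul, one_mul]
  map_zero' := zero_kronecker 1
  map_add' A B := add_kronecker A B 1
  commutes' r := by simp only [Algebra.algebraMap_eq_smul_one, smul_kronecker, one_kronecker_one]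

@[simp]
theorem kroneckerOneAlgHom_apply (A : Matrix m m R) : kroneckerOneAlgHom m n R A = A ⊗ₖ 1 := rfl

theorem kroneckerOneAlgHom_injective [Nonempty n] :
    Function.Injective (kroneckerOneAlgHom m n R) := by
  intro A B h
  obtain ⟨b⟩ := ‹Nonempty n›
  ext a a'
  simpa using congr_fun₂ h (a, b) (a', b)

end Kronecker

section SkolemNoether

variable {n K : Type*} [Fintype n] [DecidableEq n]

/- The intertwiner of `f` with the identity is the matrix whose `i`-th column is
`f (single i z 1) * e_c`; it is invertible once `f (single z z 1)` has a nonzero entry `(r, c)`. -/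
theorem _root_.AlgHom.apply_mul_sum_eq_sum_mul [CommRing K]
    (f : Matrix n n K →ₐ[K] Matrix n n K) (z c : n) (X : Matrix n n K) :
    f X * ∑ i, f (single i z 1) * single c i 1 = (∑ i, f (single i z 1) * single c i 1) * X := by
  have hsingle : ∀ j k, f (single j k 1) * ∑ i, f (single i z 1) * single c i 1 =
      (∑ i, f (single i z 1) * single c i 1) * single j k 1 := by
    intro j k
    rw [Finset.mul_sum, Finset.sum_mul, Finset.sum_eq_single k, Finset.sum_eq_single j]
    · rw [← mul_assoc, ← map_mul, mul_assoc, single_mul_single_same, single_mul_single_same,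
        one_mul]
    · intro i _ hij
      rw [mul_assoc, single_mul_single_of_ne (h := hij), mul_zero]
    · simp
    · intro i _ hik
      rw [← mul_assoc, ← map_mul, single_mul_single_of_ne (h := hik.symm), map_zero, zero_mul]
    · simp
  induction X using Matrix.induction_on' with
  | h_zero => simp
  | h_add A B hA hB => rw [map_add, add_mul, hA, hB, mul_add]
  | h_std_basis j k a =>
    rw [show single j k a = a • single j k 1 by rw [smul_single, smul_eq_mul, mul_one],
      map_smul, smul_mul_assoc, hsingle, mul_smul_comm]

theorem _root_.AlgHom.sum_mul_sum_eq_one [Field K] (f : Matrix n n K →ₐ[K] Matrix n n K)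
    {z r c : n} (h : f (single z z 1) r c ≠ 0) :
    (∑ i, single i r (f (single z z 1) r c)⁻¹ * f (single z i 1)) *
      ∑ i, f (single i z 1) * single c i 1 = 1 := by
  rw [← sum_single_one, Finset.sum_mul]
  refine Finset.sum_congr rfl fun i _ => ?_
  rw [Finset.mul_sum, Finset.sum_eq_single i]
  · rw [← mul_assoc, mul_assoc (single i r _), ← map_mul, single_mul_single_same, one_mul,
      single_mul_mul_single, inv_mul_cancel₀ h, one_mul]
  · intro l _ hli
    rw [← mul_assoc, mul_assoc (single i r _), ← map_mul, single_mul_single_of_ne (h := hli.symm),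
      map_zero, mul_zero, zero_mul]
  · simp

theorem _root_.AlgHom.exists_isUnit_apply_eq_inv_mul_mul [Field K]
    (f : Matrix n n K →ₐ[K] Matrix n n K) :
    ∃ V : Matrix n n K, IsUnit V ∧ ∀ X, f X = V⁻¹ * X * V := by
  cases isEmpty_or_nonempty n
  · exact ⟨1, isUnit_one, fun X => Subsingleton.elim _ _⟩
  obtain ⟨z⟩ := ‹Nonempty n›
  have hf : f (single z z 1) ≠ 0 :=
    (map_ne_zero_iff f f.toRingHom.injective).mpr fun h => by simpa using congr_fun₂ h z z
  obtain ⟨r, c, hrc⟩ : ∃ r c, f (single z z 1) r c ≠ 0 := by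
    by_contra! h
    exact hf (Matrix.ext h)
  set R := ∑ i, f (single i z 1) * single c i 1
  set L := ∑ i, single i r (f (single z z 1) r c)⁻¹ * f (single z i 1)
  have hLR : L * R = 1 := f.sum_mul_sum_eq_one hrc
  have hRL : R * L = 1 := mul_eq_one_comm.mp hLR
  refine ⟨L, ⟨⟨L, R, hLR, hRL⟩, rfl⟩, fun X => ?_⟩
  calc f X = f X * R * L := by rw [mul_assoc, hRL, mul_one]
    _ = L⁻¹ * X * L := by
      rw [inv_eq_right_inv hLR]
      exact congrArg (· * L) (f.apply_mul_sum_eq_sum_mul z c X)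

end SkolemNoether

end Matrix

theorem stmt1_general (dA dB : ℕ) (hB : 1 ≤ dB)
    (U : Matrix (Fin dA × Fin dB) (Fin dA × Fin dB) ℂ)
    (hU : U ∈ Matrix.unitaryGroup (Fin dA × Fin dB) ℂ)
    (hcomm : ∀ (OA : Matrix (Fin dA) (Fin dA) ℂ) (OB : Matrix (Fin dB) (Fin dB) ℂ),
      Commute (Uᴴ * (OA ⊗ₖ (1 : Matrix (Fin dB) (Fin dB) ℂ)) * U)
        ((1 : Matrix (Fin dA) (Fin dA) ℂ) ⊗ₖ OB)) :
    ∃ VA : Matrix (Fin dA) (Fin dA) ℂ, IsUnit VA ∧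
      ∀ OA : Matrix (Fin dA) (Fin dA) ℂ,
        Uᴴ * (OA ⊗ₖ (1 : Matrix (Fin dB) (Fin dB) ℂ)) * U
          = (VA⁻¹ * OA * VA) ⊗ₖ (1 : Matrix (Fin dB) (Fin dB) ℂ) := by
  have : Nonempty (Fin dB) := ⟨⟨0, hB⟩⟩
  let φ := (Unitary.conjStarAlgAut ℂ _ ⟨U, hU⟩).symm.toAlgEquiv.toAlgHom.comp
    (kroneckerOneAlgHom (Fin dA) (Fin dB) ℂ)
  obtain ⟨F, hF⟩ := AlgHom.exists_comp_eq_of_forall_mem_range kroneckerOneAlgHom_injective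
    (φ := φ) fun OA => (exists_eq_kronecker_one_of_forall_commute (hcomm OA)).imp fun _ h => h.symm
  obtain ⟨V, hV, hFV⟩ := F.exists_isUnit_apply_eq_inv_mul_mul
  refine ⟨V, hV, fun OA => ?_⟩
  rw [← hFV]
  exact (AlgHom.congr_fun hF OA).symm

theorem stmt1 (dA dB : ℕ) (hA : 1 ≤ dA) (hB : 1 ≤ dB)
    (U : Matrix (Fin dA × Fin dB) (Fin dA × Fin dB) ℂ)
    (hU : U ∈ Matrix.unitaryGroup (Fin dA × Fin dB) ℂ)
    (hcomm : ∀ (OA : Matrix (Fin dA) (Fin dA) ℂ) (OB : Matrix (Fin dB) (Fin dB) ℂ),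
      Commute (Uᴴ * (OA ⊗ₖ (1 : Matrix (Fin dB) (Fin dB) ℂ)) * U)
        ((1 : Matrix (Fin dA) (Fin dA) ℂ) ⊗ₖ OB)) :
    ∃ VA : Matrix (Fin dA) (Fin dA) ℂ, IsUnit VA ∧
      ∀ OA : Matrix (Fin dA) (Fin dA) ℂ,
        Uᴴ * (OA ⊗ₖ (1 : Matrix (Fin dB) (Fin dB) ℂ)) * U
          = (VA⁻¹ * OA * VA) ⊗ₖ (1 : Matrix (Fin dB) (Fin dB) ℂ) :=
  stmt1_general dA dB hB U hU hcomm
end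

section
/- Let G be a finite group and z: [0,1] → (G → U(n)) a continuous path such that each z(λ) is a projective unitary representation of G whose factor set is a 2-coboundary (trivial cohomology class). Then there exists a continuous family of functions ω_g: [0,1] → U(1) such that λ ↦ (g ↦ ω_g(λ) z_g(λ)) is a continuous path of linear (honest) representations of G. -/
/-!
Divide each `z_g(λ)` by a continuous `n`-th root `r_g(λ)` of its determinant, obtained by lifting
the path `λ ↦ det z_g(λ)` through the covering `w ↦ wⁿ` of `ℂˣ`. The rescaled family `u` has
determinant one, so its factor set `c` satisfies `cⁿ = 1`; being continuous on the connected
interval, `c` is constant in `λ`. Hence a trivialization of `u(0)` trivializes every `u(λ)`, and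
dividing it by `r` gives `ω`.
-/

open Matrix unitInterval

theorem exists_continuous_pow_eq {f : I → ℂ} (hf : Continuous f) (hf0 : ∀ t, f t ≠ 0) {n : ℕ}
    (hn : n ≠ 0) : ∃ r : I → ℂ, Continuous r ∧ ∀ t, r t ^ n = f t := by
  obtain ⟨e, he⟩ := IsAlgClosed.exists_pow_nat_eq (f 0) hn.bot_lt
  have he0 : e ≠ 0 := by rintro rfl; exact hf0 0 (by rw [← he, zero_pow hn])
  obtain ⟨Γ, hΓ, -⟩ := (isCoveringMap_npow (𝕜 := ℂ) n (Nat.cast_ne_zero.2 hn)).exists_path_lifts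
    ⟨fun t => ⟨f t, hf0 t⟩, by fun_prop⟩ ⟨e, he0⟩ (Subtype.ext he.symm)
  exact ⟨fun t => Γ t, by fun_prop, fun t => congrArg Subtype.val (congrFun hΓ t)⟩

theorem eq_of_continuous_of_pow_eq_one {X : Type*} [TopologicalSpace X] [PreconnectedSpace X]
    {R : Type*} [CommRing R] [IsDomain R] [TopologicalSpace R] [T1Space R] {f : X → R}
    (hf : Continuous f) {k : ℕ} (hk : k ≠ 0) (hpow : ∀ x, f x ^ k = 1) (x y : X) : f x = f y :=
  isPreconnected_univ.constant_of_mapsTo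
    (Polynomial.nthRootsFinset k (1 : R)).finite_toSet.isDiscrete hf.continuousOn
    (fun x _ => (Polynomial.mem_nthRootsFinset hk.bot_lt 1).2 (hpow x)) trivial trivial

theorem exists_continuous_root_det_of_unitary {m : Type*} [Fintype m] [DecidableEq m]
    {z : I → Matrix m m ℂ} (hz : Continuous z) (hunit : ∀ t, z t ∈ unitaryGroup m ℂ) :
    ∃ r : I → ℂ, Continuous r ∧ ∀ t, ‖r t‖ = 1 ∧ r t ^ Fintype.card m = (z t).det := by
  have hdet : ∀ t, ‖(z t).det‖ = 1 := fun t =>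
    CStarRing.norm_of_mem_unitary (det_of_mem_unitary (hunit t))
  rcases isEmpty_or_nonempty m with hm | hm
  · exact ⟨1, continuous_const, fun t => by simp⟩
  have hcard : Fintype.card m ≠ 0 := Fintype.card_ne_zero
  obtain ⟨r, hr_cont, hr_pow⟩ := exists_continuous_pow_eq hz.matrix_det
    (fun t => ne_zero_of_norm_ne_zero ((hdet t).symm ▸ one_ne_zero)) hcard
  refine ⟨r, hr_cont, fun t => ⟨?_, hr_pow t⟩⟩
  rw [← pow_left_inj₀ (norm_nonneg _) zero_le_one hcard, ← norm_pow, hr_pow, hdet, one_pow]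

section ProjectiveRep

variable {G : Type*} [Group G] {K : Type*} [Field K] {m : Type*} [Fintype m]

def IsProjectiveRep (z : G → Matrix m m K) : Prop :=
  ∀ g h, ∃ c : K, z g * z h = c • z (g * h)

def IsTrivialization (z : G → Matrix m m K) (α : G → K) : Prop :=
  ∀ g h, (α g • z g) * (α h • z h) = α (g * h) • z (g * h)

theorem isTrivialization_smul_iff (z : G → Matrix m m K) (s β : G → K) :
    IsTrivialization (fun g => s g • z g) β ↔ IsTrivialization z (fun g => β g * s g) := by
  simp only [IsTrivialization, smul_smul]

theorem IsTrivialization.isProjectiveRep {z : G → Matrix m m K} {α : G → K}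
    (hα : IsTrivialization z α) (hα0 : ∀ g, α g ≠ 0) : IsProjectiveRep z := fun g h =>
  ⟨(α g * α h)⁻¹ * α (g * h), by
    rw [mul_smul, ← hα g h, smul_mul_smul, inv_smul_smul₀ (mul_ne_zero (hα0 g) (hα0 h))]⟩

theorem IsProjectiveRep.smul {z : G → Matrix m m K} (hz : IsProjectiveRep z) {s : G → K}
    (hs : ∀ g, s g ≠ 0) : IsProjectiveRep fun g => s g • z g := fun g h => by
  obtain ⟨c, hc⟩ := hz g h
  exact ⟨s g * s h * c * (s (g * h))⁻¹, by
    rw [smul_mul_smul, hc, smul_smul, smul_smul, inv_mul_cancel_right₀ (hs _)]⟩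

theorem mul_adjugate_apply_self_of_mul_eq_smul [DecidableEq m] {A B C : Matrix m m K}
    (hC : C.det = 1) {c : K} (h : A * B = c • C) (i : m) : (A * B * adjugate C) i i = c := by
  rw [h, smul_mul_assoc, mul_adjugate, hC, one_smul, Matrix.smul_apply, one_apply_eq, smul_eq_mul,
    mul_one]

theorem pow_card_eq_one_of_mul_eq_smul [DecidableEq m] {A B C : Matrix m m K} (hA : A.det = 1)
    (hB : B.det = 1) (hC : C.det = 1) {c : K} (h : A * B = c • C) : c ^ Fintype.card m = 1 := by
  simpa [hA, hB, hC] using (congrArg det h).symm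

theorem IsTrivialization.of_det_eq_one [TopologicalSpace K] [IsTopologicalRing K] [T1Space K]
    [DecidableEq m] [Nonempty m] {X : Type*} [TopologicalSpace X] [PreconnectedSpace X]
    {u : X → G → Matrix m m K} (hcont : ∀ g, Continuous fun x => u x g)
    (hdet : ∀ x g, (u x g).det = 1) (hproj : ∀ x, IsProjectiveRep (u x)) {x₀ : X} {α : G → K}
    (hα : IsTrivialization (u x₀) α) (x : X) : IsTrivialization (u x) α := by
  intro g h
  obtain ⟨i⟩ := ‹Nonempty m›
  set c : X → K := fun x => (u x g * u x h * adjugate (u x (g * h))) i i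
  have hc : ∀ x, u x g * u x h = c x • u x (g * h) := fun x => by
    obtain ⟨c', hc'⟩ := hproj x g h
    rwa [show c x = c' from mul_adjugate_apply_self_of_mul_eq_smul (hdet x _) hc' i]
  have hc_const : c x = c x₀ := by
    refine eq_of_continuous_of_pow_eq_one ?_ Fintype.card_ne_zero
      (fun x => pow_card_eq_one_of_mul_eq_smul (hdet x g) (hdet x h) (hdet x _) (hc x)) x x₀
    exact (((hcont g).matrix_mul (hcont h)).matrix_mul (hcont _).matrix_adjugate).matrix_elem i i
  have hu_ne : u x₀ (g * h) ≠ 0 := fun h0 => by simpa [h0] using hdet x₀ (g * h)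
  have hα_c : α g * α h * c x₀ = α (g * h) := by
    refine smul_left_injective K hu_ne ?_
    simp only [← hα g h, smul_mul_smul, hc x₀, smul_smul]
  rw [smul_mul_smul, hc x, smul_smul, hc_const, hα_c]

end ProjectiveRep

theorem stmt13_general (G : Type*) [Group G] (n : ℕ)
    (z : Set.Icc (0 : ℝ) 1 → G → Matrix (Fin n) (Fin n) ℂ)
    (hcont : ∀ g : G, Continuous fun lam => z lam g)
    (hunit : ∀ lam g, z lam g ∈ Matrix.unitaryGroup (Fin n) ℂ)
    (htriv : ∀ lam, ∃ α : G → ℂ, (∀ g, ‖α g‖ = 1) ∧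
      ∀ g h, (α g • z lam g) * (α h • z lam h) = α (g * h) • z lam (g * h)) :
    ∃ ω : Set.Icc (0 : ℝ) 1 → G → ℂ,
      (∀ g : G, Continuous fun lam => ω lam g) ∧
      (∀ lam g, ‖ω lam g‖ = 1) ∧
      ∀ lam (g h : G),
        (ω lam g • z lam g) * (ω lam h • z lam h) = ω lam (g * h) • z lam (g * h) := by
  rcases isEmpty_or_nonempty (Fin n) with hn | hn
  · exact ⟨fun _ _ => 1, fun _ => continuous_const, fun _ _ => norm_one,
      fun _ _ _ => Subsingleton.elim _ _⟩
  choose r hr_cont hr using fun g => exists_continuous_root_det_of_unitary (hcont g) (hunit · g)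
  have hr0 : ∀ g lam, r g lam ≠ 0 := fun g lam =>
    ne_zero_of_norm_ne_zero ((hr g lam).1.symm ▸ one_ne_zero)
  set u := fun lam g => (r g lam)⁻¹ • z lam g
  have hu_det : ∀ lam g, (u lam g).det = 1 := fun lam g => by
    rw [det_smul, inv_pow, ← (hr g lam).2, inv_mul_cancel₀ (pow_ne_zero _ (hr0 g lam))]
  have hu_proj : ∀ lam, IsProjectiveRep (u lam) := fun lam => by
    obtain ⟨β, hβ_norm, hβ⟩ := htriv lam
    refine (IsTrivialization.isProjectiveRep hβ fun g => ?_).smul fun g => inv_ne_zero (hr0 g lam)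
    exact ne_zero_of_norm_ne_zero ((hβ_norm g).symm ▸ one_ne_zero)
  obtain ⟨α, hα_norm, hα⟩ := htriv 0
  have hu_triv : IsTrivialization (u 0) fun g => α g * r g 0 := by
    refine (isTrivialization_smul_iff _ _ _).2 ?_
    convert (show IsTrivialization (z 0) α from hα) using 2
    exact mul_inv_cancel_right₀ (hr0 _ 0) _
  refine ⟨fun lam g => α g * r g 0 * (r g lam)⁻¹,
    fun g => continuous_const.mul ((hr_cont g).inv₀ (hr0 g)), fun lam g => by simp [hα_norm, hr],
    fun lam => (isTrivialization_smul_iff _ _ _).1 ?_⟩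
  exact hu_triv.of_det_eq_one (fun g => ((hr_cont g).inv₀ (hr0 g)).smul (hcont g)) hu_det hu_proj
    lam

theorem stmt13 (G : Type*) [Group G] [Fintype G] (n : ℕ)
    (z : Set.Icc (0 : ℝ) 1 → G → Matrix (Fin n) (Fin n) ℂ)
    (hcont : ∀ g : G, Continuous fun lam => z lam g)
    (hunit : ∀ lam g, z lam g ∈ Matrix.unitaryGroup (Fin n) ℂ)
    (htriv : ∀ lam, ∃ α : G → ℂ, (∀ g, ‖α g‖ = 1) ∧
      ∀ g h, (α g • z lam g) * (α h • z lam h) = α (g * h) • z lam (g * h)) :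
    ∃ ω : Set.Icc (0 : ℝ) 1 → G → ℂ,
      (∀ g : G, Continuous fun lam => ω lam g) ∧
      (∀ lam g, ‖ω lam g‖ = 1) ∧
      ∀ lam (g h : G),
        (ω lam g • z lam g) * (ω lam h • z lam h) = ω lam (g * h) • z lam (g * h) :=
  stmt13_general G n z hcont hunit htriv
end

section
/- Let U(λ) = U_A(λ) ⊗ U_B(λ), λ ∈ [0,1], be a continuous path of unitaries on ℂ^{d_A} ⊗ ℂ^{d_B}, where for each λ the tensor factors U_A(λ), U_B(λ) are unitary (individually defined only up to a U(1) phase). Then the phases can be chosen so that λ ↦ U_A(λ) and λ ↦ U_B(λ) are both continuous paths of unitaries with U(λ) = U_A(λ) ⊗ U_B(λ) for all λ. -/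
open Matrix Kronecker

/-!
Near any parameter value some entry `U (i, k) (j, l) = U_A i j * U_B k l` is nonzero, and there
the factors can be read off continuously from `U`: the `(k, l)` block of `U` is `U_B k l • U_A`,
which normalised by the length of its `j`-th column is `U_A` up to a phase, and dividing the
`(i, j)` blocks by its `(i, j)` entry gives the matching second factor. Any two unitary
factorisations of the same matrix differ by a phase `(c • A, star c • B)` with `|c| = 1`, so local
factorisations can be glued along `[0, 1]` after rephasing each new piece to agree with the old
one at the junction; connectedness of `[0, 1]` makes the gluing reach the whole interval.
-/

open Set Filter Topology

section Gluing

variable {X Y : Type*} [TopologicalSpace X] [TopologicalSpace Y]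

def HasContinuousSectionOn (S : X → Set Y) (A : Set X) : Prop :=
  ∃ s : X → Y, ContinuousOn s A ∧ ∀ x ∈ A, s x ∈ S x

theorem HasContinuousSectionOn.mono {S : X → Set Y} {A B : Set X}
    (h : HasContinuousSectionOn S A) (hBA : B ⊆ A) : HasContinuousSectionOn S B :=
  let ⟨s, hs, hsS⟩ := h
  ⟨s, hs.mono hBA, fun x hx => hsS x (hBA hx)⟩

def IsFibrewiseHomogeneous (S : X → Set Y) : Prop :=
  ∀ x, ∀ y ∈ S x, ∀ y' ∈ S x, ∃ φ : Y → Y, Continuous φ ∧ φ y = y' ∧ ∀ t, MapsTo φ (S t) (S t)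

variable [LinearOrder X] {S : X → Set Y}

theorem HasContinuousSectionOn.Iic_of_Icc [OrderClosedTopology X] (hS : IsFibrewiseHomogeneous S)
    {a b : X} (hab : a ≤ b) (h₁ : HasContinuousSectionOn S (Iic a))
    (h₂ : HasContinuousSectionOn S (Icc a b)) : HasContinuousSectionOn S (Iic b) := by
  classical
  obtain ⟨s, hs, hsS⟩ := h₁
  obtain ⟨σ, hσ, hσS⟩ := h₂
  obtain ⟨φ, hφ, hφa, hφS⟩ := hS a (σ a) (hσS a ⟨le_rfl, hab⟩) (s a) (hsS a le_rfl)
  have hglue : ∀ x ∈ Icc a b, (Iic a).piecewise s (φ ∘ σ) x = φ (σ x) := by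
    intro x hx
    by_cases hxa : x ∈ Iic a
    · rw [piecewise_eq_of_mem _ _ _ hxa, le_antisymm hxa hx.1, hφa]
    · exact piecewise_eq_of_notMem _ _ _ hxa
  refine ⟨(Iic a).piecewise s (φ ∘ σ), ?_, fun x hx => ?_⟩
  · rw [← Iic_union_Icc_eq_Iic hab]
    exact (hs.congr fun x hx => piecewise_eq_of_mem _ _ _ hx).union_of_isClosed
      ((hφ.comp_continuousOn hσ).congr hglue) isClosed_Iic isClosed_Icc
  · by_cases hxa : x ∈ Iic a
    · rw [piecewise_eq_of_mem _ _ _ hxa]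
      exact hsS x hxa
    · rw [hglue x ⟨(not_le.1 hxa).le, hx⟩]
      exact hφS x (hσS x ⟨(not_le.1 hxa).le, hx⟩)

theorem isLocallyConstant_hasContinuousSectionOn_Iic [OrderTopology X]
    (hloc : ∀ x, ∃ V ∈ 𝓝 x, HasContinuousSectionOn S V) (hS : IsFibrewiseHomogeneous S) :
    IsLocallyConstant fun t => HasContinuousSectionOn S (Iic t) := by
  rw [IsLocallyConstant.iff_eventually_eq]
  intro x
  obtain ⟨V, hV, hsec⟩ := hloc x
  obtain ⟨b, c, hx, hW, hWV⟩ := exists_Icc_mem_subset_of_mem_nhds hV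
  have transfer : ∀ y ∈ Icc b c, ∀ z ∈ Icc b c,
      HasContinuousSectionOn S (Iic y) → HasContinuousSectionOn S (Iic z) := by
    intro y hy z hz h
    rcases le_total z y with hzy | hyz
    · exact h.mono (Iic_subset_Iic.2 hzy)
    · exact h.Iic_of_Icc hS hyz (hsec.mono ((Icc_subset_Icc hy.1 hz.2).trans hWV))
  filter_upwards [hW] with y hy
  exact propext ⟨transfer y hy x hx, transfer x hx y hy⟩

theorem exists_continuous_section_of_local_sections [OrderTopology X] [BoundedOrder X]
    [PreconnectedSpace X] (hloc : ∀ x, ∃ V ∈ 𝓝 x, HasContinuousSectionOn S V)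
    (hS : IsFibrewiseHomogeneous S) : ∃ s : X → Y, Continuous s ∧ ∀ x, s x ∈ S x := by
  have hbot : HasContinuousSectionOn S (Iic ⊥) := by
    obtain ⟨V, hV, hsec⟩ := hloc ⊥
    exact hsec.mono (by simpa [Iic_bot] using mem_of_mem_nhds hV)
  obtain ⟨s, hs, hsS⟩ :=
    (isLocallyConstant_hasContinuousSectionOn_Iic hloc hS).apply_eq_of_preconnectedSpace ⊥ ⊤ ▸ hbot
  rw [Iic_top, continuousOn_univ] at hs
  exact ⟨s, hs, fun x => hsS x (mem_Iic.2 le_top)⟩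

end Gluing

namespace Matrix

theorem exists_ne_zero_apply {m n α : Type*} [Zero α] {A : Matrix m n α} (hA : A ≠ 0) :
    ∃ i j, A i j ≠ 0 := by
  by_contra! h
  exact hA (Matrix.ext h)

theorem exists_smul_of_kronecker_eq_kronecker {ι κ μ ν K : Type*} [Field K]
    {A A' : Matrix ι κ K} {B B' : Matrix μ ν K} (hA : A ≠ 0) (hB : B ≠ 0)
    (h : A ⊗ₖ B = A' ⊗ₖ B') : ∃ c : K, A' = c • A ∧ B = c • B' := by
  have hent : ∀ i j k l, A i j * B k l = A' i j * B' k l := fun i j k l => by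
    simpa using congrFun₂ h (i, k) (j, l)
  obtain ⟨i, j, hij⟩ := exists_ne_zero_apply hA
  obtain ⟨k, l, hkl⟩ := exists_ne_zero_apply hB
  have hB'kl : B' k l ≠ 0 := right_ne_zero_of_mul (hent i j k l ▸ mul_ne_zero hij hkl)
  refine ⟨B k l / B' k l, ?_, ?_⟩
  · ext a b
    rw [smul_apply, smul_eq_mul, div_mul_eq_mul_div, eq_div_iff hB'kl]
    linear_combination -hent a b k l
  · ext r s
    rw [smul_apply, smul_eq_mul, div_mul_eq_mul_div, eq_div_iff hB'kl]
    apply mul_left_cancel₀ hij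
    linear_combination B' k l * hent i j r s - B' r s * hent i j k l

variable {m : Type*} [Fintype m] [DecidableEq m]

theorem ne_zero_of_mem_unitaryGroup [Nonempty m] {A : Matrix m m ℂ}
    (hA : A ∈ unitaryGroup m ℂ) : A ≠ 0 := by
  rintro rfl
  simpa using mem_unitaryGroup_iff'.1 hA

theorem sum_norm_sq_col_of_mem_unitaryGroup {A : Matrix m m ℂ}
    (hA : A ∈ unitaryGroup m ℂ) (j : m) : ∑ p, ‖A p j‖ ^ 2 = 1 := by
  have := congrFun₂ (mem_unitaryGroup_iff'.1 hA) j j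
  simp only [mul_apply, star_apply, one_apply_eq, RCLike.star_def, Complex.conj_mul'] at this
  exact_mod_cast this

theorem mem_unitary_of_smul_mem_unitaryGroup [Nonempty m] {A : Matrix m m ℂ} {c : ℂ}
    (hA : A ∈ unitaryGroup m ℂ) (hcA : c • A ∈ unitaryGroup m ℂ) : c ∈ unitary ℂ := by
  rw [Unitary.mem_iff_star_mul_self]
  have := mem_unitaryGroup_iff'.1 hcA
  rw [star_smul, smul_mul_smul_comm, mem_unitaryGroup_iff'.1 hA] at this
  simpa using congrFun₂ this (Classical.arbitrary m) (Classical.arbitrary m)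

end Matrix

theorem Complex.div_norm_mem_unitary {z : ℂ} (hz : z ≠ 0) : z / ‖z‖ ∈ unitary ℂ := by
  have hnorm : ‖z / ‖z‖‖ = 1 := by
    rw [norm_div, Complex.norm_real, norm_norm, div_self (norm_ne_zero_iff.2 hz)]
  rw [Unitary.mem_iff_star_mul_self, RCLike.star_def, Complex.conj_mul', hnorm]
  simp

section UnitaryFactorizations

variable {m n : Type*}

def rephase (c : ℂ) (P : Matrix m m ℂ × Matrix n n ℂ) : Matrix m m ℂ × Matrix n n ℂ :=
  (c • P.1, star c • P.2)

theorem continuous_rephase (c : ℂ) : Continuous (rephase (m := m) (n := n) c) := by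
  unfold rephase
  fun_prop

variable [Fintype m]

noncomputable def leftKroneckerFactor (M : Matrix (m × n) (m × n) ℂ) (j : m) (k l : n) :
    Matrix m m ℂ :=
  ((√(∑ p, ‖M (p, k) (j, l)‖ ^ 2) : ℝ) : ℂ)⁻¹ • M.submatrix (·, k) (·, l)

noncomputable def kroneckerSection (M : Matrix (m × n) (m × n) ℂ) (i j : m) (k l : n) :
    Matrix m m ℂ × Matrix n n ℂ :=
  (leftKroneckerFactor M j k l, (leftKroneckerFactor M j k l i j)⁻¹ • M.submatrix (i, ·) (j, ·))

theorem continuousAt_kroneckerSection {M : Matrix (m × n) (m × n) ℂ} {i j : m} {k l : n}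
    (hM : M (i, k) (j, l) ≠ 0) : ContinuousAt (kroneckerSection · i j k l) M := by
  have hcol : ((√(∑ p, ‖M (p, k) (j, l)‖ ^ 2) : ℝ) : ℂ) ≠ 0 := by
    have hle : ‖M (i, k) (j, l)‖ ^ 2 ≤ ∑ p, ‖M (p, k) (j, l)‖ ^ 2 :=
      Finset.single_le_sum (f := fun p => ‖M (p, k) (j, l)‖ ^ 2) (fun _ _ => by positivity)
        (Finset.mem_univ i)
    have hpos : 0 < ‖M (i, k) (j, l)‖ ^ 2 := by positivity
    exact_mod_cast (Real.sqrt_pos.2 (hpos.trans_le hle)).ne'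
  have hleft : ContinuousAt (leftKroneckerFactor · j k l) M := by
    have hnorm : Continuous fun M : Matrix (m × n) (m × n) ℂ =>
        ((√(∑ p, ‖M (p, k) (j, l)‖ ^ 2) : ℝ) : ℂ) := by fun_prop
    exact (hnorm.continuousAt.inv₀ hcol).smul (by fun_prop)
  have hij : leftKroneckerFactor M j k l i j ≠ 0 := by
    simp [leftKroneckerFactor, hcol, hM]
  exact hleft.prodMk
    ((((continuous_id (X := Matrix m m ℂ)).matrix_elem i j).continuousAt.comp hleft).inv₀ hij
      |>.smul (by fun_prop))

variable [DecidableEq m] [Fintype n] [DecidableEq n]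

def unitaryFactorizations (M : Matrix (m × n) (m × n) ℂ) : Set (Matrix m m ℂ × Matrix n n ℂ) :=
  {P | P.1 ∈ unitaryGroup m ℂ ∧ P.2 ∈ unitaryGroup n ℂ ∧ M = P.1 ⊗ₖ P.2}

theorem rephase_mem_unitaryFactorizations {c : ℂ} (hc : c ∈ unitary ℂ)
    {M : Matrix (m × n) (m × n) ℂ} {P : Matrix m m ℂ × Matrix n n ℂ}
    (hP : P ∈ unitaryFactorizations M) : rephase c P ∈ unitaryFactorizations M := by
  obtain ⟨hA, hB, hM⟩ := hP
  refine ⟨Unitary.smul_mem_of_mem hc hA, Unitary.smul_mem_of_mem (Unitary.star_mem hc) hB, ?_⟩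
  rw [rephase, smul_kronecker, kronecker_smul, smul_smul, Unitary.mul_star_self_of_mem hc,
    one_smul, hM]

theorem exists_rephase_eq [Nonempty m] [Nonempty n] {M : Matrix (m × n) (m × n) ℂ}
    {P Q : Matrix m m ℂ × Matrix n n ℂ} (hP : P ∈ unitaryFactorizations M)
    (hQ : Q ∈ unitaryFactorizations M) : ∃ c ∈ unitary ℂ, rephase c P = Q := by
  obtain ⟨hPA, hPB, hPM⟩ := hP
  obtain ⟨hQA, -, hQM⟩ := hQ
  obtain ⟨c, hQA', hPB'⟩ := exists_smul_of_kronecker_eq_kronecker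
    (ne_zero_of_mem_unitaryGroup hPA) (ne_zero_of_mem_unitaryGroup hPB) (hPM.symm.trans hQM)
  have hc : c ∈ unitary ℂ := mem_unitary_of_smul_mem_unitaryGroup hPA (hQA' ▸ hQA)
  refine ⟨c, hc, Prod.ext hQA'.symm ?_⟩
  rw [rephase, hPB', smul_smul, Unitary.star_mul_self_of_mem hc, one_smul]

theorem isFibrewiseHomogeneous_unitaryFactorizations [Nonempty m] [Nonempty n] {X : Type*}
    (U : X → Matrix (m × n) (m × n) ℂ) :
    IsFibrewiseHomogeneous fun x => unitaryFactorizations (U x) := by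
  intro x P hP Q hQ
  obtain ⟨c, hc, rfl⟩ := exists_rephase_eq hP hQ
  exact ⟨rephase c, continuous_rephase c, rfl, fun _ _ hR => rephase_mem_unitaryFactorizations hc hR⟩

theorem kroneckerSection_mem_unitaryFactorizations {M : Matrix (m × n) (m × n) ℂ}
    {P : Matrix m m ℂ × Matrix n n ℂ} (hP : P ∈ unitaryFactorizations M) {i j : m} {k l : n}
    (hM : M (i, k) (j, l) ≠ 0) : kroneckerSection M i j k l ∈ unitaryFactorizations M := by
  obtain ⟨hA, hB, rfl⟩ := hP
  set β := P.2 k l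
  simp only [kroneckerMap_apply] at hM
  have hβ : β ≠ 0 := right_ne_zero_of_mul hM
  have hAij : P.1 i j ≠ 0 := left_ne_zero_of_mul hM
  have hc := Complex.div_norm_mem_unitary hβ
  have hleft : leftKroneckerFactor (P.1 ⊗ₖ P.2) j k l = (β / ‖β‖) • P.1 := by
    have hcol : √(∑ p, ‖(P.1 ⊗ₖ P.2) (p, k) (j, l)‖ ^ 2) = ‖β‖ := by
      simp only [kroneckerMap_apply, norm_mul, mul_pow, ← Finset.sum_mul,
        sum_norm_sq_col_of_mem_unitaryGroup hA, one_mul]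
      exact Real.sqrt_sq (norm_nonneg _)
    rw [leftKroneckerFactor, hcol]
    ext p q
    simp only [Matrix.smul_apply, Matrix.submatrix_apply, kroneckerMap_apply, smul_eq_mul]
    ring
  convert rephase_mem_unitaryFactorizations hc ⟨hA, hB, rfl⟩ using 1
  refine Prod.ext hleft ?_
  ext r s
  simp only [kroneckerSection, rephase, hleft, Matrix.smul_apply, Matrix.submatrix_apply,
    kroneckerMap_apply, smul_eq_mul]
  rw [eq_inv_of_mul_eq_one_left (Unitary.star_mul_self_of_mem hc), mul_inv,
    mul_assoc, inv_mul_cancel_left₀ hAij]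

theorem exists_hasContinuousSectionOn_unitaryFactorizations [Nonempty m] [Nonempty n]
    {X : Type*} [TopologicalSpace X] {U : X → Matrix (m × n) (m × n) ℂ} (hU : Continuous U)
    (hfac : ∀ x, (unitaryFactorizations (U x)).Nonempty) (x₀ : X) :
    ∃ V ∈ 𝓝 x₀, HasContinuousSectionOn (fun x => unitaryFactorizations (U x)) V := by
  obtain ⟨P, hA, hB, hPU⟩ := hfac x₀
  obtain ⟨i, j, hij⟩ := exists_ne_zero_apply (ne_zero_of_mem_unitaryGroup hA)
  obtain ⟨k, l, hkl⟩ := exists_ne_zero_apply (ne_zero_of_mem_unitaryGroup hB)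
  have hx₀ : U x₀ (i, k) (j, l) ≠ 0 := by
    rw [hPU, kroneckerMap_apply]
    exact mul_ne_zero hij hkl
  refine ⟨{x | U x (i, k) (j, l) ≠ 0},
    (isOpen_ne_fun (hU.matrix_elem _ _) continuous_const).mem_nhds hx₀,
    fun x => kroneckerSection (U x) i j k l, fun x hx => ?_, fun x hx => ?_⟩
  · exact ((continuousAt_kroneckerSection hx).comp hU.continuousAt).continuousWithinAt
  · exact kroneckerSection_mem_unitaryFactorizations (hfac x).some_mem hx

end UnitaryFactorizations

theorem stmt14_general (dA dB : ℕ) (hA : 0 < dA) (hB : 0 < dB)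
    (U : Set.Icc (0 : ℝ) 1 → Matrix (Fin dA × Fin dB) (Fin dA × Fin dB) ℂ)
    (hcont : Continuous U)
    (hfac : ∀ lam, ∃ (UA : Matrix (Fin dA) (Fin dA) ℂ) (UB : Matrix (Fin dB) (Fin dB) ℂ),
      UA ∈ Matrix.unitaryGroup (Fin dA) ℂ ∧ UB ∈ Matrix.unitaryGroup (Fin dB) ℂ ∧
      U lam = UA ⊗ₖ UB) :
    ∃ (A : Set.Icc (0 : ℝ) 1 → Matrix (Fin dA) (Fin dA) ℂ)
      (B : Set.Icc (0 : ℝ) 1 → Matrix (Fin dB) (Fin dB) ℂ),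
      Continuous A ∧ Continuous B ∧
      (∀ lam, A lam ∈ Matrix.unitaryGroup (Fin dA) ℂ) ∧
      (∀ lam, B lam ∈ Matrix.unitaryGroup (Fin dB) ℂ) ∧
      ∀ lam, U lam = A lam ⊗ₖ B lam := by
  have : Nonempty (Fin dA) := Fin.pos_iff_nonempty.1 hA
  have : Nonempty (Fin dB) := Fin.pos_iff_nonempty.1 hB
  have hfac' : ∀ x, (unitaryFactorizations (U x)).Nonempty := fun x =>
    let ⟨UA, UB, hUA, hUB, hUx⟩ := hfac x
    ⟨(UA, UB), hUA, hUB, hUx⟩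
  obtain ⟨s, hs, hsU⟩ := exists_continuous_section_of_local_sections
    (exists_hasContinuousSectionOn_unitaryFactorizations hcont hfac')
    (isFibrewiseHomogeneous_unitaryFactorizations U)
  exact ⟨fun x => (s x).1, fun x => (s x).2, hs.fst, hs.snd, fun x => (hsU x).1,
    fun x => (hsU x).2.1, fun x => (hsU x).2.2⟩

theorem stmt14 (dA dB : ℕ) (hA : 0 < dA) (hB : 0 < dB)
    (U : Set.Icc (0 : ℝ) 1 → Matrix (Fin dA × Fin dB) (Fin dA × Fin dB) ℂ)
    (hcont : Continuous U)
    (hunit : ∀ lam, U lam ∈ Matrix.unitaryGroup (Fin dA × Fin dB) ℂ)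
    (hfac : ∀ lam, ∃ (UA : Matrix (Fin dA) (Fin dA) ℂ) (UB : Matrix (Fin dB) (Fin dB) ℂ),
      UA ∈ Matrix.unitaryGroup (Fin dA) ℂ ∧ UB ∈ Matrix.unitaryGroup (Fin dB) ℂ ∧
      U lam = UA ⊗ₖ UB) :
    ∃ (A : Set.Icc (0 : ℝ) 1 → Matrix (Fin dA) (Fin dA) ℂ)
      (B : Set.Icc (0 : ℝ) 1 → Matrix (Fin dB) (Fin dB) ℂ),
      Continuous A ∧ Continuous B ∧
      (∀ lam, A lam ∈ Matrix.unitaryGroup (Fin dA) ℂ) ∧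
      (∀ lam, B lam ∈ Matrix.unitaryGroup (Fin dB) ℂ) ∧
      ∀ lam, U lam = A lam ⊗ₖ B lam :=
  stmt14_general dA dB hA hB U hcont hfac
end

section
/- Let d ≥ 2, ω = e^{2πi/d}, and let V: ℤ_d × ℤ_d → U(n) be a projective representation with V_{(m,n)} V_{(m',n')} = ω^{t m' n} V_{(m+m',n+n')} for a fixed integer t. Suppose Λ ∈ M_n(ℂ) commutes with all V_{(m,n)}. Then every eigenvalue of Λ has multiplicity at least d/gcd(d,t): if Λ v = λ v with V_{(1,0)} v = ω^{n₀} v, then the vectors V_{(0,1)}^n v for n = 0, …, d/gcd(d,t) − 1 are eigenvectors of Λ with eigenvalue λ and pairwise distinct V_{(1,0)}-eigenvalues ω^{n₀ − t n}. -/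
/-!
Write `X = V (1, 0)` and `Y = V (0, 1)`. The cocycle gives `ω ^ t • (X * Y) = Y * X`, hence
`ω ^ (t k) • (X * Y ^ k) = Y ^ k * X`, so `Y ^ k` maps the `ω ^ n₀`-eigenvector `v` of `X` to an
eigenvector with eigenvalue `ω ^ n₀ / ω ^ (t k)`; it stays in the `μ`-eigenspace of `Λ` because
`Λ` commutes with `Y`, and is nonzero because `Y` is unitary. Since `ω ^ t` is a primitive
`d / gcd d t`-th root of unity, the first `d / gcd d t` of these eigenvalues are distinct, so the
vectors are linearly independent.
-/

open Matrix

theorem pow_val_one_of_pow_eq_one {M : Type*} [Monoid M] {ω : M} {d : ℕ} (hω : ω ^ d = 1) :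
    ω ^ (1 : ZMod d).val = ω := by
  rw [ZMod.val_one_eq_one_mod, ← pow_eq_pow_mod 1 hω, pow_one]

theorem IsPrimitiveRoot.pow_div_gcd {M : Type*} [CommMonoid M] {ζ : M} {k : ℕ}
    (h : IsPrimitiveRoot ζ k) (hk : k ≠ 0) (t : ℕ) : IsPrimitiveRoot (ζ ^ t) (k / k.gcd t) := by
  rw [IsPrimitiveRoot.iff_orderOf, (h.isOfFinOrder hk).orderOf_pow, ← h.eq_orderOf]

theorem smul_mul_pow_eq_pow_mul {K A : Type*} [CommSemiring K] [Semiring A] [Algebra K A]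
    {a b : A} {c : K} (h : c • (a * b) = b * a) (k : ℕ) : c ^ k • (a * b ^ k) = b ^ k * a := by
  induction k with
  | zero => simp
  | succ k ih =>
    calc c ^ (k + 1) • (a * b ^ (k + 1))
        = c • ((c ^ k • (a * b ^ k)) * b) := by
          rw [smul_mul_assoc, smul_smul, ← pow_succ', mul_assoc, ← pow_succ]
      _ = b ^ (k + 1) * a := by
          rw [ih, mul_assoc, ← mul_smul_comm, h, ← mul_assoc, ← pow_succ]

theorem smul_mul_comm_of_projRep {K A : Type*} [Field K] [Ring A] [Algebra K A] {d t : ℕ}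
    {ω : K} {V : ZMod d × ZMod d → A} (hω : ω ^ d = 1)
    (hV : ∀ p q : ZMod d × ZMod d, V p * V q = ω ^ (t * q.1.val * p.2.val) • V (p + q)) :
    ω ^ t • (V (1, 0) * V (0, 1)) = V (0, 1) * V (1, 0) := by
  have hωt : (ω ^ t) ^ (1 : ZMod d).val = ω ^ t :=
    pow_val_one_of_pow_eq_one (by rw [pow_right_comm, hω, one_pow])
  rw [hV, hV, ZMod.val_zero, mul_zero, pow_zero, one_smul, pow_mul, pow_mul, hωt, hωt]
  simp only [Prod.mk_add_mk, add_zero, zero_add]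

theorem Matrix.mulVec_mulVec_eq_smul_of_smul_mul_eq {ι K : Type*} [Fintype ι] [Field K]
    {X Y : Matrix ι ι K} {c μ : K} {v : ι → K} (hc : c ≠ 0) (hXY : c • (X * Y) = Y * X)
    (hv : X *ᵥ v = μ • v) : X *ᵥ (Y *ᵥ v) = (μ * c⁻¹) • (Y *ᵥ v) := by
  rw [mulVec_mulVec, ← inv_smul_smul₀ hc (X * Y), hXY, smul_mulVec, ← mulVec_mulVec, hv,
    mulVec_smul, smul_smul, mul_comm]

theorem card_le_finrank_of_hasEigenvector_mem {K M ι : Type*} [Field K] [AddCommGroup M]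
    [Module K M] [FiniteDimensional K M] [Fintype ι] (f : Module.End K M) {ν : ι → K}
    (hν : Function.Injective ν) {x : ι → M} (hx : ∀ i, f.HasEigenvector (ν i) (x i))
    {E : Submodule K M} (hxE : ∀ i, x i ∈ E) : Fintype.card ι ≤ Module.finrank K E := by
  rw [← finrank_span_eq_card (f.eigenvectors_linearIndependent' ν hν x hx)]
  exact Submodule.finrank_mono (Submodule.span_le.mpr (Set.range_subset_iff.mpr hxE))

theorem stmt17_general (d t n : ℕ) [NeZero d]
    (ω : ℂ) (hωdef : ω = Complex.exp (2 * Real.pi * Complex.I / d))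
    (V : ZMod d × ZMod d → Matrix (Fin n) (Fin n) ℂ)
    (hVu : ∀ p, V p ∈ Matrix.unitaryGroup (Fin n) ℂ)
    (hV : ∀ p q : ZMod d × ZMod d,
      V p * V q = ω ^ (t * q.1.val * p.2.val) • V (p + q))
    (Λ : Matrix (Fin n) (Fin n) ℂ) (hΛ : ∀ p, Commute Λ (V p))
    (μ : ℂ) (v : Fin n → ℂ) (hv : v ≠ 0)
    (hev : Λ.mulVec v = μ • v)
    (n₀ : ℕ) (hV10 : (V (1, 0)).mulVec v = ω ^ n₀ • v) :
    (∀ k : ℕ, Λ.mulVec (((V (0, 1)) ^ k).mulVec v)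
        = μ • ((V (0, 1)) ^ k).mulVec v) ∧
    (∀ k : ℕ, ((V (0, 1)) ^ k).mulVec v ≠ 0) ∧
    (∀ k : ℕ, (V (1, 0)).mulVec (((V (0, 1)) ^ k).mulVec v)
        = (ω ^ n₀ * (ω ^ (t * k))⁻¹) • ((V (0, 1)) ^ k).mulVec v) ∧
    (∀ k k' : ℕ, k < d / Nat.gcd d t → k' < d / Nat.gcd d t → k ≠ k' →
      ω ^ n₀ * (ω ^ (t * k))⁻¹ ≠ ω ^ n₀ * (ω ^ (t * k'))⁻¹) ∧
    d / Nat.gcd d t ≤ Module.finrank ℂ (Module.End.eigenspace (Matrix.toLin' Λ) μ) := by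
  have hω : IsPrimitiveRoot ω d := hωdef ▸ Complex.isPrimitiveRoot_exp d (NeZero.ne d)
  have hω0 : ω ≠ 0 := hω.ne_zero (NeZero.ne d)
  have hΛeig (k : ℕ) : Λ *ᵥ (V (0, 1) ^ k *ᵥ v) = μ • (V (0, 1) ^ k *ᵥ v) := by
    rw [mulVec_mulVec, ((hΛ _).pow_right k).eq, ← mulVec_mulVec, hev, mulVec_smul]
  have hne (k : ℕ) : V (0, 1) ^ k *ᵥ v ≠ 0 := by
    have hinj := mulVec_injective_iff_isUnit.mpr
      ((Unitary.isUnit_coe (U := ⟨_, hVu (0, 1)⟩)).pow k)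
    exact fun h => hv (hinj (h.trans (mulVec_zero _).symm))
  have hXeig (k : ℕ) : V (1, 0) *ᵥ (V (0, 1) ^ k *ᵥ v)
      = (ω ^ n₀ * (ω ^ (t * k))⁻¹) • (V (0, 1) ^ k *ᵥ v) := by
    refine mulVec_mulVec_eq_smul_of_smul_mul_eq (pow_ne_zero _ hω0) ?_ hV10
    rw [pow_mul]
    exact smul_mul_pow_eq_pow_mul (smul_mul_comm_of_projRep hω.pow_eq_one hV) k
  have hdistinct (k k' : ℕ) (hk : k < d / d.gcd t) (hk' : k' < d / d.gcd t) (hkk' : k ≠ k') :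
      ω ^ n₀ * (ω ^ (t * k))⁻¹ ≠ ω ^ n₀ * (ω ^ (t * k'))⁻¹ := by
    rw [Ne, mul_right_inj' (pow_ne_zero _ hω0), _root_.inv_inj, pow_mul, pow_mul]
    exact fun h => hkk' ((hω.pow_div_gcd (NeZero.ne d) t).pow_inj hk hk' h)
  refine ⟨hΛeig, hne, hXeig, hdistinct, ?_⟩
  simpa using card_le_finrank_of_hasEigenvector_mem (Matrix.toLin' (V (1, 0)))
    (ν := fun k : Fin (d / d.gcd t) => ω ^ n₀ * (ω ^ (t * (k : ℕ)))⁻¹)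
    (fun k k' h => Fin.ext (by_contra fun hkk' => hdistinct k k' k.2 k'.2 hkk' h))
    (fun k => ⟨by simpa using hXeig k, hne k⟩)
    (fun k => by simpa using hΛeig k)

theorem stmt17 (d t n : ℕ) (hd : 2 ≤ d) [NeZero d] (ht : 1 ≤ t)
    (ω : ℂ) (hωdef : ω = Complex.exp (2 * Real.pi * Complex.I / d))
    (V : ZMod d × ZMod d → Matrix (Fin n) (Fin n) ℂ)
    (hVu : ∀ p, V p ∈ Matrix.unitaryGroup (Fin n) ℂ)
    (hV : ∀ p q : ZMod d × ZMod d,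
      V p * V q = ω ^ (t * q.1.val * p.2.val) • V (p + q))
    (Λ : Matrix (Fin n) (Fin n) ℂ) (hΛ : ∀ p, Commute Λ (V p))
    (μ : ℂ) (v : Fin n → ℂ) (hv : v ≠ 0)
    (hev : Λ.mulVec v = μ • v)
    (n₀ : ℕ) (hV10 : (V (1, 0)).mulVec v = ω ^ n₀ • v) :
    (∀ k : ℕ, Λ.mulVec (((V (0, 1)) ^ k).mulVec v)
        = μ • ((V (0, 1)) ^ k).mulVec v) ∧
    (∀ k : ℕ, ((V (0, 1)) ^ k).mulVec v ≠ 0) ∧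
    (∀ k : ℕ, (V (1, 0)).mulVec (((V (0, 1)) ^ k).mulVec v)
        = (ω ^ n₀ * (ω ^ (t * k))⁻¹) • ((V (0, 1)) ^ k).mulVec v) ∧
    (∀ k k' : ℕ, k < d / Nat.gcd d t → k' < d / Nat.gcd d t → k ≠ k' →
      ω ^ n₀ * (ω ^ (t * k))⁻¹ ≠ ω ^ n₀ * (ω ^ (t * k'))⁻¹) ∧
    d / Nat.gcd d t ≤ Module.finrank ℂ (Module.End.eigenspace (Matrix.toLin' Λ) μ) :=
  stmt17_general d t n ω hωdef V hVu hV Λ hΛ μ v hv hev n₀ hV10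
end

section
/- Let d ≥ 1, t ≥ 1, q = gcd(d,t), d̃ = d/q. Let X be the d×d shift matrix and P = q⁻¹ Σ_{j∈ℤ_q} X^{j d̃}. Then P is a projector (P² = P = P†) of rank d̃, and, setting X_P = P X P and Z_P = P Z^q P with Z the clock matrix, one has X_P^{d̃} = Z_P^{d̃} = P and X_P Z_P = e^{2πi/d̃} Z_P X_P on the range of P. -/
/-!
The shift `X` is the permutation matrix of translation by `1` on `Fin d` and the clock `Z` is the
diagonal matrix of an additive character `ψ`. Then `P` is the average over the cyclic group
generated by `y = X ^ d'`, which has order `q`; since `y` is unitary, `P` is an orthogonal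
projector, and its trace is `d / q` because only the identity translation has nonzero trace.
Both `X` and `Z ^ q` commute with `y` (the phase is `ψ (q • d' • 1) = ψ 0 = 1`), hence with `P`,
so compressing by `P` is a homomorphism on them and the relations reduce to `X ^ d' * P = P`,
`Z ^ d = 1` and `X * Z ^ q = ψ 1 ^ q • Z ^ q * X` with `ψ 1 ^ q = e^{2πi/d'}`.
-/

open Matrix Finset

section CyclicAverage

variable (𝕜 : Type*) {A : Type*} [Field 𝕜] [Ring A] [Algebra 𝕜 A]

noncomputable def cyclicAverage (y : A) (q : ℕ) : A := (q : 𝕜)⁻¹ • ∑ j ∈ range q, y ^ j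

variable {𝕜} {y : A} {q : ℕ}

theorem mul_geom_sum_of_pow_eq_one (hy : y ^ q = 1) :
    y * ∑ j ∈ range q, y ^ j = ∑ j ∈ range q, y ^ j :=
  sub_eq_zero.mp (by rw [← sub_one_mul, mul_geom_sum, hy, sub_self])

theorem pow_mul_geom_sum_of_pow_eq_one (hy : y ^ q = 1) (k : ℕ) :
    y ^ k * ∑ j ∈ range q, y ^ j = ∑ j ∈ range q, y ^ j := by
  induction k with
  | zero => rw [pow_zero, one_mul]
  | succ k ih => rw [pow_succ, mul_assoc, mul_geom_sum_of_pow_eq_one hy, ih]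

theorem geom_sum_mul_geom_sum_of_pow_eq_one (hy : y ^ q = 1) :
    (∑ j ∈ range q, y ^ j) * ∑ j ∈ range q, y ^ j = q • ∑ j ∈ range q, y ^ j := by
  simp_rw [sum_mul, pow_mul_geom_sum_of_pow_eq_one hy, sum_const, card_range]

theorem star_geom_sum_mul_geom_sum_of_pow_eq_one [StarRing A] (hy : y ^ q = 1)
    (hu : star y * y = 1) :
    star (∑ j ∈ range q, y ^ j) * ∑ j ∈ range q, y ^ j = q • ∑ j ∈ range q, y ^ j := by
  have hstar (k : ℕ) : star y ^ k * ∑ j ∈ range q, y ^ j = ∑ j ∈ range q, y ^ j := by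
    induction k with
    | zero => rw [pow_zero, one_mul]
    | succ k ih =>
      rw [pow_succ', mul_assoc, ih]
      nth_rw 1 [← mul_geom_sum_of_pow_eq_one hy]
      rw [← mul_assoc, hu, one_mul]
  simp_rw [star_sum, star_pow, sum_mul, hstar, sum_const, card_range]

theorem mul_cyclicAverage_of_pow_eq_one (hy : y ^ q = 1) :
    y * cyclicAverage 𝕜 y q = cyclicAverage 𝕜 y q := by
  rw [cyclicAverage, mul_smul_comm, mul_geom_sum_of_pow_eq_one hy]

theorem Commute.cyclicAverage_right {a : A} (h : Commute a y) :
    Commute a (cyclicAverage 𝕜 y q) :=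
  (Commute.sum_right _ _ _ fun j _ => h.pow_right j).smul_right _

theorem isIdempotentElem_cyclicAverage (hy : y ^ q = 1) (hq : (q : 𝕜) ≠ 0) :
    IsIdempotentElem (cyclicAverage 𝕜 y q) := by
  rw [IsIdempotentElem, cyclicAverage, smul_mul_smul_comm, geom_sum_mul_geom_sum_of_pow_eq_one hy,
    ← Nat.cast_smul_eq_nsmul 𝕜, smul_smul, mul_assoc, inv_mul_cancel₀ hq, mul_one]

theorem isSelfAdjoint_cyclicAverage [StarRing 𝕜] [StarRing A] [StarModule 𝕜 A]
    (hy : y ^ q = 1) (hu : star y * y = 1) (hq : (q : 𝕜) ≠ 0) :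
    IsSelfAdjoint (cyclicAverage 𝕜 y q) := by
  -- `S = q⁻¹ • (star S * S)` is manifestly self-adjoint.
  have hS : ∑ j ∈ range q, y ^ j
      = (q : 𝕜)⁻¹ • (star (∑ j ∈ range q, y ^ j) * ∑ j ∈ range q, y ^ j) := by
    rw [star_geom_sum_mul_geom_sum_of_pow_eq_one hy hu, ← Nat.cast_smul_eq_nsmul 𝕜, smul_smul,
      inv_mul_cancel₀ hq, one_smul]
  have hqstar : star (q : 𝕜)⁻¹ = (q : 𝕜)⁻¹ := by rw [star_inv₀, star_natCast]
  rw [IsSelfAdjoint, cyclicAverage, star_smul, hqstar, hS, star_smul, hqstar, star_mul, star_star]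

end CyclicAverage

section Compression

variable {M : Type*} [Monoid M] {p a b : M}

theorem IsIdempotentElem.mul_mul_self_of_commute (hp : IsIdempotentElem p) (h : Commute a p) :
    p * a * p = a * p := by
  rw [← h.eq, mul_assoc, hp.eq]

theorem IsIdempotentElem.mul_mul_self_pow_of_commute (hp : IsIdempotentElem p) (h : Commute a p)
    {n : ℕ} (hn : n ≠ 0) : (p * a * p) ^ n = a ^ n * p := by
  rw [hp.mul_mul_self_of_commute h, h.mul_pow, hp.pow_eq hn]

theorem IsIdempotentElem.mul_mul_self_mul_of_commute (hp : IsIdempotentElem p) (ha : Commute a p)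
    (hb : Commute b p) : p * a * p * (p * b * p) = a * b * p := by
  rw [hp.mul_mul_self_of_commute ha, hp.mul_mul_self_of_commute hb, mul_assoc, ← mul_assoc p,
    ← hb.eq, mul_assoc, hp.eq, mul_assoc]

end Compression

theorem Matrix.rank_eq_trace_of_isIdempotentElem {K n : Type*} [Field K] [Fintype n]
    [DecidableEq n] {M : Matrix n n K} (h : IsIdempotentElem M) : (M.rank : K) = M.trace := by
  have hlin : IsIdempotentElem (toLin' M) := h.map toLinAlgEquiv'
  rw [← trace_toLin'_eq, ((toLin' M).isProj_range_iff_isIdempotentElem.mpr hlin).trace]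
  rfl

theorem Matrix.conjTranspose_permMatrix_mul_self {n R : Type*} [Fintype n] [DecidableEq n]
    [Semiring R] [StarRing R] (σ : Equiv.Perm n) : (σ.permMatrix R)ᴴ * σ.permMatrix R = 1 := by
  rw [conjTranspose_permMatrix, ← permMatrix_mul, mul_inv_cancel, permMatrix_one]

section Translation

variable {G R : Type*} [AddCommGroup G] [Fintype G] [DecidableEq G]

theorem permMatrix_addRight_pow [Semiring R] (a : G) (k : ℕ) :
    (Equiv.addRight a).permMatrix R ^ k = (Equiv.addRight (k • a)).permMatrix R := by
  induction k with
  | zero => rw [pow_zero, zero_smul, Equiv.addRight_zero, permMatrix_one]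
  | succ k ih =>
    rw [pow_succ, ih, ← permMatrix_mul, succ_nsmul]
    congr 1
    ext x
    simp [add_assoc]

theorem permMatrix_addRight_pow_addOrderOf [Semiring R] (a : G) :
    (Equiv.addRight a).permMatrix R ^ addOrderOf a = 1 := by
  rw [permMatrix_addRight_pow, addOrderOf_nsmul_eq_zero, Equiv.addRight_zero, permMatrix_one]

theorem trace_permMatrix_addRight [AddCommMonoidWithOne R] (a : G) :
    ((Equiv.addRight a).permMatrix R).trace = if a = 0 then (Fintype.card G : R) else 0 := by
  rw [trace_permutation]
  split_ifs with ha
  · simp [ha, Function.fixedPoints, Function.IsFixedPt, Set.ncard_univ, Nat.card_eq_fintype_card]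
  · simp [ha, Function.fixedPoints, Function.IsFixedPt]

theorem permMatrix_addRight_mul_diagonal [CommSemiring R] (ψ : AddChar G R) (a : G) :
    (Equiv.addRight a).permMatrix R * diagonal ψ
      = ψ a • (diagonal ψ * (Equiv.addRight a).permMatrix R) := by
  ext i j
  by_cases h : i + a = j
  · subst h
    simp [PEquiv.toMatrix_apply, AddChar.map_add_eq_mul, mul_comm]
  · simp [PEquiv.toMatrix_apply, h]

theorem diagonal_pow_card_eq_one [CommSemiring R] (ψ : AddChar G R) :
    diagonal ψ ^ Fintype.card G = 1 := by
  rw [diagonal_pow, ← diagonal_one]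
  congr 1
  funext a
  rw [Pi.pow_apply, ← AddChar.map_nsmul_eq_pow, card_nsmul_eq_zero, AddChar.map_zero_eq_one]

theorem commute_permMatrix_addRight_diagonal [CommSemiring R] (ψ : AddChar G R) {a : G}
    (ha : ψ a = 1) : Commute ((Equiv.addRight a).permMatrix R) (diagonal ψ) := by
  rw [Commute, SemiconjBy, permMatrix_addRight_mul_diagonal, ha, one_smul]

theorem trace_cyclicAverage_permMatrix_addRight {K : Type*} [Field K] (a : G) :
    (cyclicAverage K ((Equiv.addRight a).permMatrix K) (addOrderOf a)).trace
      = (addOrderOf a : K)⁻¹ * Fintype.card G := by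
  rw [cyclicAverage, trace_smul, trace_sum, smul_eq_mul, sum_eq_single 0]
  · rw [pow_zero, trace_one, Fintype.card]
  · intro j hj hj0
    rw [permMatrix_addRight_pow, trace_permMatrix_addRight,
      if_neg (nsmul_ne_zero_of_lt_addOrderOf hj0 (mem_range.mp hj))]
  · exact fun h => absurd (mem_range.mpr (addOrderOf_pos a)) h

variable {K : Type*} [Field K] [CharZero K] (a : G)

theorem isIdempotentElem_cyclicAverage_permMatrix_addRight :
    IsIdempotentElem (cyclicAverage K ((Equiv.addRight a).permMatrix K) (addOrderOf a)) :=
  isIdempotentElem_cyclicAverage (permMatrix_addRight_pow_addOrderOf a)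
    (Nat.cast_ne_zero.mpr (addOrderOf_pos a).ne')

theorem isSelfAdjoint_cyclicAverage_permMatrix_addRight [StarRing K] :
    IsSelfAdjoint (cyclicAverage K ((Equiv.addRight a).permMatrix K) (addOrderOf a)) :=
  isSelfAdjoint_cyclicAverage (permMatrix_addRight_pow_addOrderOf a)
    (conjTranspose_permMatrix_mul_self _) (Nat.cast_ne_zero.mpr (addOrderOf_pos a).ne')

theorem rank_cyclicAverage_permMatrix_addRight :
    (cyclicAverage K ((Equiv.addRight a).permMatrix K) (addOrderOf a)).rank * addOrderOf a
      = Fintype.card G := by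
  apply Nat.cast_injective (R := K)
  have hq : (addOrderOf a : K) ≠ 0 := Nat.cast_ne_zero.mpr (addOrderOf_pos a).ne'
  rw [Nat.cast_mul, rank_eq_trace_of_isIdempotentElem
    (isIdempotentElem_cyclicAverage_permMatrix_addRight a), trace_cyclicAverage_permMatrix_addRight]
  field_simp

end Translation

section FinAddChar

variable {C : Type*} [CommMonoid C] {n : ℕ} [NeZero n] {ζ : C} (hζ : ζ ^ n = 1)

def finAddChar : AddChar (Fin n) C where
  toFun a := ζ ^ (a : ℕ)
  map_zero_eq_one' := by rw [Fin.val_zero, pow_zero]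
  map_add_eq_mul' a b := by rw [Fin.val_add, ← pow_eq_pow_mod _ hζ, pow_add]

theorem finAddChar_apply (a : Fin n) : finAddChar hζ a = ζ ^ (a : ℕ) :=
  rfl

theorem finAddChar_one : finAddChar hζ 1 = ζ := by
  rw [finAddChar_apply, Fin.val_one', ← pow_eq_pow_mod _ hζ, pow_one]

end FinAddChar

open Fin.CommRing in
theorem Fin.addOrderOf_one (n : ℕ) [NeZero n] : addOrderOf (1 : Fin n) = n :=
  CharP.eq (Fin n) (CharP.addOrderOf_one (Fin n)) inferInstance

theorem Fin.addOrderOf_nsmul_one {d q d' : ℕ} [NeZero d] (h : q * d' = d) :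
    addOrderOf (d' • (1 : Fin d)) = q := by
  have hd' : d' ≠ 0 := by rintro rfl; exact NeZero.ne d (by simp [← h])
  rw [addOrderOf_nsmul_of_dvd hd' ⟨q, by rw [Fin.addOrderOf_one, ← h, mul_comm]⟩,
    Fin.addOrderOf_one, ← h, Nat.mul_div_cancel _ (Nat.pos_of_ne_zero hd')]

theorem stmt18_general (d t : ℕ) [NeZero d]
    (X Z : Matrix (Fin d) (Fin d) ℂ)
    (hX : ∀ i j : Fin d, X i j = if i + 1 = j then 1 else 0)
    (hZ : ∀ i j : Fin d, Z i j
      = if i = j then Complex.exp (2 * Real.pi * Complex.I * ((j : ℕ) : ℂ) / d) else 0)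
    (q d' : ℕ) (hq : q = Nat.gcd d t) (hd' : d' = d / q)
    (P : Matrix (Fin d) (Fin d) ℂ)
    (hP : P = (q : ℂ)⁻¹ • ∑ j ∈ Finset.range q, X ^ (j * d')) :
    P * P = P ∧ Pᴴ = P ∧ P.rank = d' ∧
    (P * X * P) ^ d' = P ∧ (P * Z ^ q * P) ^ d' = P ∧
    (P * X * P) * (P * Z ^ q * P)
      = Complex.exp (2 * Real.pi * Complex.I / d') • ((P * Z ^ q * P) * (P * X * P)) := by
  have hqd : q * d' = d := hd' ▸ Nat.mul_div_cancel' (hq ▸ Nat.gcd_dvd_left d t)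
  have hq0 : q ≠ 0 := left_ne_zero_of_mul (hqd.symm ▸ NeZero.ne d)
  have hd'0 : d' ≠ 0 := right_ne_zero_of_mul (hqd.symm ▸ NeZero.ne d)
  have hζ := (Complex.isPrimitiveRoot_exp d (NeZero.ne d)).pow_eq_one
  obtain rfl : X = (Equiv.addRight 1).permMatrix ℂ := by
    ext i j
    simp [hX, PEquiv.toMatrix_apply]
  obtain rfl : Z = diagonal (finAddChar hζ) := by
    ext i j
    rw [hZ, diagonal_apply]
    split_ifs with h
    · rw [h, finAddChar_apply, ← Complex.exp_nat_mul]
      ring_nf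
    · rfl
  set ψ := finAddChar hζ with hψ
  set a : Fin d := d' • 1
  have horder : addOrderOf a = q := Fin.addOrderOf_nsmul_one hqd
  have hXa : (Equiv.addRight 1).permMatrix ℂ ^ d' = (Equiv.addRight a).permMatrix ℂ :=
    permMatrix_addRight_pow _ _
  replace hP : P = cyclicAverage ℂ ((Equiv.addRight a).permMatrix ℂ) (addOrderOf a) := by
    rw [hP, cyclicAverage, horder]
    refine congrArg _ (sum_congr rfl fun j _ => ?_)
    rw [mul_comm, pow_mul, hXa]
  have hPP : IsIdempotentElem P := hP ▸ isIdempotentElem_cyclicAverage_permMatrix_addRight a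
  have hXP : Commute ((Equiv.addRight 1).permMatrix ℂ) P :=
    hP ▸ (hXa ▸ Commute.self_pow _ d').cyclicAverage_right
  have hZq : diagonal ψ ^ q = diagonal ⇑(ψ ^ q) := by rw [diagonal_pow, AddChar.coe_pow]
  have hZP : Commute (diagonal ψ ^ q) P := by
    have hψa : (ψ ^ q) a = 1 := by
      rw [AddChar.pow_apply, ← AddChar.map_nsmul_eq_pow, ← horder, addOrderOf_nsmul_eq_zero,
        AddChar.map_zero_eq_one]
    rw [hP, hZq]
    exact (commute_permMatrix_addRight_diagonal _ hψa).symm.cyclicAverage_right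
  refine ⟨hPP, hP ▸ isSelfAdjoint_cyclicAverage_permMatrix_addRight a, ?_, ?_, ?_, ?_⟩
  · have hrank := hP ▸ rank_cyclicAverage_permMatrix_addRight (K := ℂ) a
    refine Nat.eq_of_mul_eq_mul_right (Nat.pos_of_ne_zero hq0) ?_
    rw [← horder, hrank, Fintype.card_fin, horder, ← hqd, mul_comm]
  · rw [hPP.mul_mul_self_pow_of_commute hXP hd'0, hXa, hP,
      mul_cyclicAverage_of_pow_eq_one (permMatrix_addRight_pow_addOrderOf a)]
  · have hZd : diagonal ψ ^ d = 1 := by simpa using diagonal_pow_card_eq_one ψ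
    rw [hPP.mul_mul_self_pow_of_commute hZP hd'0, ← pow_mul, hqd, hZd, one_mul]
  · have hphase : (ψ ^ q) 1 = Complex.exp (2 * Real.pi * Complex.I / d') := by
      rw [AddChar.pow_apply, hψ, finAddChar_one, ← Complex.exp_nat_mul, ← hqd, Nat.cast_mul]
      field_simp
    rw [hPP.mul_mul_self_mul_of_commute hXP hZP, hPP.mul_mul_self_mul_of_commute hZP hXP, hZq,
      permMatrix_addRight_mul_diagonal, smul_mul_assoc, hphase]

theorem stmt18 (d t : ℕ) (hd : 1 ≤ d) [NeZero d] (ht : 1 ≤ t)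
    (X Z : Matrix (Fin d) (Fin d) ℂ)
    (hX : ∀ i j : Fin d, X i j = if i + 1 = j then 1 else 0)
    (hZ : ∀ i j : Fin d, Z i j
      = if i = j then Complex.exp (2 * Real.pi * Complex.I * ((j : ℕ) : ℂ) / d) else 0)
    (q d' : ℕ) (hq : q = Nat.gcd d t) (hd' : d' = d / q)
    (P : Matrix (Fin d) (Fin d) ℂ)
    (hP : P = (q : ℂ)⁻¹ • ∑ j ∈ Finset.range q, X ^ (j * d')) :
    P * P = P ∧ Pᴴ = P ∧ P.rank = d' ∧
    (P * X * P) ^ d' = P ∧ (P * Z ^ q * P) ^ d' = P ∧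
    (P * X * P) * (P * Z ^ q * P)
      = Complex.exp (2 * Real.pi * Complex.I / d') • ((P * Z ^ q * P) * (P * X * P)) :=
  stmt18_general d t X Z hX hZ q d' hq hd' P hP
end

section
/- Let G be a finite group, H = ℂ^{d_G} with orthonormal basis indexed by G, and suppose ρ_g |h⟩ = |gh⟩ is the regular representation. Let v = Σ_{g_l,g_r} e^{−iθ(g_l⁻¹ g_r, g_r⁻¹)} |g_l g_r⟩⟨g_l g_r| on H ⊗ H, where e^{iθ} is a 2-cocycle. Then (ρ_g ⊗ ρ_g) v = v (y_g ⊗ x_g) where x_g = Σ_k e^{iθ(k⁻¹,g)} |k⟩⟨g⁻¹k| and y_g = x_g^* (entrywise complex conjugate); moreover x_g x_h = e^{iθ(g,h)} x_{gh}. -/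
/-!
All matrices involved are monomial (one nonzero entry per row and column), so both identities can
be checked entry by entry, and each reduces to a single instance of the cocycle identity: at
`(k⁻¹, g, h)` for `x_g x_h = ω(g, h) x_{gh}`, and at `(g_l⁻¹ g_r, g_r⁻¹ g⁻¹, g)` for the
intertwining relation, where unimodularity of the phases turns complex conjugation into inversion.
-/

open Matrix Kronecker

namespace TwistedRegular

variable {G R : Type*} [Group G]

theorem star_cocycle_eq [CommRing R] [StarRing R] {ω : G → G → R}
    (hω : ∀ g h k, ω g h * ω (g * h) k = ω g (h * k) * ω h k)
    (hunit : ∀ g h, star (ω g h) * ω g h = 1) (u s g : G) :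
    star (ω u (s * g)) = star (ω u s) * star (ω (u * s) g) * ω s g := by
  have hstar := congrArg star (hω u s g)
  simp only [star_mul'] at hstar
  linear_combination (-star (ω u (s * g))) * hunit s g - ω s g * hstar

variable [DecidableEq G]

def twistedRegular [Zero R] (ω : G → G → R) (g : G) : Matrix G G R :=
  Matrix.of fun a b => if a = g * b then ω a⁻¹ g else 0

def cocycleDiagonal [Zero R] [Star R] (ω : G → G → R) : Matrix (G × G) (G × G) R :=
  diagonal fun p => star (ω (p.1⁻¹ * p.2) p.2⁻¹)

theorem twistedRegular_apply [Zero R] (ω : G → G → R) (g a b : G) :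
    twistedRegular ω g a b = if a = g * b then ω a⁻¹ g else 0 :=
  rfl

variable [Fintype G]

theorem twistedRegular_mul [CommSemiring R] {ω : G → G → R}
    (hω : ∀ g h k, ω g h * ω (g * h) k = ω g (h * k) * ω h k) (g h : G) :
    twistedRegular ω g * twistedRegular ω h = ω g h • twistedRegular ω (g * h) := by
  ext a b
  rw [mul_apply, Finset.sum_eq_single (h * b) (fun c _ hc => by simp [twistedRegular_apply, hc])
    (by simp)]
  simp only [twistedRegular_apply, Matrix.smul_apply, smul_eq_mul, mul_assoc, if_true]
  split_ifs with hab
  · subst hab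
    simpa [mul_assoc, mul_comm] using hω (g * (h * b))⁻¹ g h
  · simp

theorem regular_kronecker_mul_cocycleDiagonal [CommRing R] [StarRing R] {ω : G → G → R}
    (hω : ∀ g h k, ω g h * ω (g * h) k = ω g (h * k) * ω h k)
    (hunit : ∀ g h, star (ω g h) * ω g h = 1) (g : G) :
    (twistedRegular 1 g ⊗ₖ twistedRegular 1 g) * cocycleDiagonal ω
      = cocycleDiagonal ω * ((twistedRegular ω g).map star ⊗ₖ twistedRegular ω g) := by
  ext ⟨a₁, a₂⟩ ⟨b₁, b₂⟩
  simp only [cocycleDiagonal, mul_diagonal, diagonal_mul, kroneckerMap_apply, map_apply,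
    twistedRegular_apply, Pi.one_apply]
  split_ifs with h₁ h₂ h₂
  · subst h₁ h₂
    have hcoc := star_cocycle_eq hω hunit (b₁⁻¹ * b₂) (b₂⁻¹ * g⁻¹) g
    simp only [mul_assoc, inv_mul_cancel, mul_one, mul_inv_cancel_left] at hcoc
    simp [mul_assoc, hcoc]
  all_goals simp

end TwistedRegular

open TwistedRegular in
theorem stmt19 (G : Type*) [Group G] [Fintype G] [DecidableEq G]
    (θ : G → G → ℝ)
    (hcoc : ∀ g h k : G,
      Complex.exp ((θ g h : ℂ) * Complex.I) * Complex.exp ((θ (g * h) k : ℂ) * Complex.I)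
        = Complex.exp ((θ g (h * k) : ℂ) * Complex.I) * Complex.exp ((θ h k : ℂ) * Complex.I))
    (ρ : G → Matrix G G ℂ)
    (hρ : ∀ g a b, ρ g a b = if a = g * b then 1 else 0)
    (v : Matrix (G × G) (G × G) ℂ)
    (hv : ∀ p q : G × G, v p q
      = if p = q then Complex.exp (-(θ (p.1⁻¹ * p.2) p.2⁻¹ : ℂ) * Complex.I) else 0)
    (x y : G → Matrix G G ℂ)
    (hx : ∀ g a b, x g a b
      = if a = g * b then Complex.exp ((θ a⁻¹ g : ℂ) * Complex.I) else 0)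
    (hy : ∀ g, y g = (x g).map (starRingEnd ℂ)) :
    (∀ g, (ρ g ⊗ₖ ρ g) * v = v * (y g ⊗ₖ x g)) ∧
    (∀ g h, x g * x h = Complex.exp ((θ g h : ℂ) * Complex.I) • x (g * h)) := by
  set ω : G → G → ℂ := fun g h => Complex.exp (θ g h * Complex.I)
  have hunit (g h : G) : star (ω g h) * ω g h = 1 := by
    rw [Complex.star_def, Complex.conj_mul', Complex.norm_exp_ofReal_mul_I, Complex.ofReal_one,
      one_pow]
  have hρ' : ρ = twistedRegular 1 := by
    ext g a b
    simp [hρ, twistedRegular_apply]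
  have hv' : v = cocycleDiagonal ω := by
    ext p q
    rw [hv, cocycleDiagonal, diagonal_apply, Complex.star_def, ← Complex.exp_conj]
    simp
  have hx' : x = twistedRegular ω := funext fun g => Matrix.ext (hx g)
  have hy' : y = fun g => (twistedRegular ω g).map star := funext fun g => hx' ▸ hy g
  subst hρ' hv' hx' hy'
  exact ⟨regular_kronecker_mul_cocycleDiagonal hcoc hunit, twistedRegular_mul hcoc⟩
end
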